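/- Let (M, dist) be a metric space and let Y = y_1, …, y_{k+1} be a curve with k + 1 vertices such that y_i ≠ y_{i+1} for every 1 ≤ i ≤ k. Let d* = min_{1 ≤ i ≤ k} dist(y_i, y_{i+1}), let i be an index attaining this minimum, and let X_k be the curve of complexity k obtained from Y by deleting the vertex y_i. Then d_dF(Y, X_k) ≤ d*, and every curve O with at most k vertices satisfies d_dF(Y, O) ≥ d*/2; consequently d_dF(Y, X_k) ≤ 2 · d_dF(Y, O) for every curve O of complexity k, i.e., X_k is a 2-approximate k-simplification of Y. -/

import Mathlib

/-!
Deleting the vertex `y_i` of minimal distance `d* = dist y_i y_{i+1}` to its successor costs at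
most `d*`: pair `y_i` with `y_{i+1}` and every other vertex with itself. Conversely, a traversal
of `Y` by a curve with fewer vertices must at some step advance on `Y` alone, pairing two
consecutive vertices `y_i`, `y_{i+1}` with one vertex `o`; by the triangle inequality its cost is
at least `dist y_i y_{i+1} / 2 ≥ d* / 2`.
-/

/-- One step of a traversal: each index advances by `0` or `1`,
and at least one of the two indices advances. -/
def FrechetStep (a b : ℕ × ℕ) : Prop :=
  (b.1 = a.1 ∨ b.1 = a.1 + 1) ∧ (b.2 = a.2 ∨ b.2 = a.2 + 1) ∧ a.1 + a.2 < b.1 + b.2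

/-- `T` is a traversal of two curves with `m` resp. `k` vertices.  Indices are
`0`-based: the vertices of the first curve are indexed `0, …, m-1` and those of
the second curve `0, …, k-1`. -/
def IsTraversal (m k : ℕ) (T : List (ℕ × ℕ)) : Prop :=
  T ≠ [] ∧ T.head? = some (0, 0) ∧ T.getLast? = some (m - 1, k - 1) ∧
    T.Chain' FrechetStep

/-- The cost of a traversal `T` of the curves `p` and `q`: the maximum of the
pairwise distances of points paired by `T`. -/
noncomputable def travCost {M : Type*} [MetricSpace M] (p q : ℕ → M)
    (T : List (ℕ × ℕ)) : ℝ :=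
  (T.map fun ij => dist (p ij.1) (q ij.2)).foldr max 0

/-- The discrete Fréchet distance between the curve with the `m` vertices
`p 0, …, p (m-1)` and the curve with the `k` vertices `q 0, …, q (k-1)`:
the minimum cost of a traversal of the two curves. -/
noncomputable def discreteFrechet {M : Type*} [MetricSpace M]
    (m : ℕ) (p : ℕ → M) (k : ℕ) (q : ℕ → M) : ℝ :=
  sInf (travCost p q '' {T | IsTraversal m k T})

section Traversal

lemma isTraversal_map_range {m k n : ℕ} {f : ℕ → ℕ × ℕ} (h₀ : f 0 = (0, 0))
    (hn : f n = (m - 1, k - 1)) (hstep : ∀ j < n, FrechetStep (f j) (f (j + 1))) :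
    IsTraversal m k ((List.range (n + 1)).map f) := by
  refine ⟨by simp, by simp [List.range_succ_eq_map, h₀], by simp [List.range_succ, hn], ?_⟩
  exact (List.isChain_map f).2 ((List.isChain_range_succ _ n).2 hstep)

lemma exists_isTraversal (m k : ℕ) : ∃ T, IsTraversal m k T :=
  ⟨_, isTraversal_map_range (n := m - 1 + (k - 1)) (f := fun j => (min j (m - 1), j - (m - 1)))
    (by simp) (by simp) fun j _ => by simp only [FrechetStep]; omega⟩

lemma FrechetStep.le {a b : ℕ × ℕ} (h : FrechetStep a b) : a ≤ b := by
  obtain ⟨h₁, h₂, -⟩ := h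
  exact Prod.mk_le_mk.2 ⟨by omega, by omega⟩

lemma IsTraversal.le_of_mem {m k : ℕ} {T : List (ℕ × ℕ)} (hT : IsTraversal m k T)
    {x : ℕ × ℕ} (hx : x ∈ T) : x ≤ (m - 1, k - 1) := by
  obtain ⟨-, -, hlast, hchain⟩ := hT
  have hsorted : T.Pairwise (· ≤ ·) :=
    List.isChain_iff_pairwise.1 (hchain.imp fun _ _ => FrechetStep.le)
  rw [List.getLast?_eq_some_getLast (List.ne_nil_of_mem hx), Option.some.injEq] at hlast
  exact hlast ▸ hsorted.rel_getLast hx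

/-- Along a chain of Fréchet steps, `x.1 - x.2` grows by at most one per step, and only through
a step that advances the first index alone. -/
lemma exists_horizontal_step_of_isChain {a : ℕ × ℕ} {l : List (ℕ × ℕ)}
    (h : (a :: l).IsChain FrechetStep)
    (hlt : a.1 + ((a :: l).getLast (List.cons_ne_nil a l)).2 <
      a.2 + ((a :: l).getLast (List.cons_ne_nil a l)).1) :
    ∃ i j, (i, j) ∈ a :: l ∧ (i + 1, j) ∈ a :: l := by
  induction l generalizing a with
  | nil => simp only [List.getLast_singleton] at hlt; omega
  | cons b l ih =>
    obtain ⟨hab, hbl⟩ := List.isChain_cons_cons.1 h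
    by_cases hb : b = (a.1 + 1, a.2)
    · exact ⟨a.1, a.2, by simp, by simp [← hb]⟩
    · rw [List.getLast_cons_cons] at hlt
      have hb' : ¬(b.1 = a.1 + 1 ∧ b.2 = a.2) := fun hc => hb (Prod.ext hc.1 hc.2)
      obtain ⟨i, j, hi, hj⟩ := ih hbl (by obtain ⟨h₁, h₂, h₃⟩ := hab; omega)
      exact ⟨i, j, List.mem_cons_of_mem _ hi, List.mem_cons_of_mem _ hj⟩

lemma IsTraversal.exists_horizontal_step {m k : ℕ} {T : List (ℕ × ℕ)} (hT : IsTraversal m k T)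
    (hkm : k - 1 < m - 1) : ∃ i j, (i, j) ∈ T ∧ (i + 1, j) ∈ T := by
  obtain ⟨hne, hhead, hlast, hchain⟩ := hT
  obtain ⟨a, l, rfl⟩ := List.exists_cons_of_ne_nil hne
  rw [List.head?_cons, Option.some.injEq] at hhead
  rw [List.getLast?_eq_some_getLast hne, Option.some.injEq] at hlast
  exact exists_horizontal_step_of_isChain hchain (by rw [hlast, hhead]; omega)

end Traversal

def eraseVertex {α : Type*} (p : ℕ → α) (i : ℕ) : ℕ → α :=
  fun j => if j < i then p j else p (j + 1)

section Cost

variable {M : Type*} [MetricSpace M] {p q : ℕ → M}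

lemma travCost_nonneg (T : List (ℕ × ℕ)) : 0 ≤ travCost p q T := by
  induction T with
  | nil => exact le_rfl
  | cons _ _ ih => exact ih.trans (le_max_right _ _)

lemma dist_le_travCost {T : List (ℕ × ℕ)} {x : ℕ × ℕ} (hx : x ∈ T) :
    dist (p x.1) (q x.2) ≤ travCost p q T :=
  List.le_max_of_le' 0 (List.mem_map_of_mem hx) le_rfl

lemma travCost_le {T : List (ℕ × ℕ)} {c : ℝ} (hc : 0 ≤ c)
    (h : ∀ x ∈ T, dist (p x.1) (q x.2) ≤ c) : travCost p q T ≤ c := by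
  induction T with
  | nil => exact hc
  | cons x T ih =>
    exact max_le (h x List.mem_cons_self) (ih fun y hy => h y (List.mem_cons_of_mem x hy))

lemma discreteFrechet_le_travCost {m k : ℕ} {T : List (ℕ × ℕ)} (hT : IsTraversal m k T) :
    discreteFrechet m p k q ≤ travCost p q T :=
  csInf_le ⟨0, by rintro _ ⟨T', -, rfl⟩; exact travCost_nonneg T'⟩ ⟨T, hT, rfl⟩

lemma le_discreteFrechet {m k : ℕ} {c : ℝ} (h : ∀ T, IsTraversal m k T → c ≤ travCost p q T) :
    c ≤ discreteFrechet m p k q := by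
  obtain ⟨T, hT⟩ := exists_isTraversal m k
  exact le_csInf ⟨_, T, hT, rfl⟩ (by rintro _ ⟨T', hT', rfl⟩; exact h T' hT')

lemma IsTraversal.le_two_mul_travCost {m k : ℕ} {T : List (ℕ × ℕ)} (hT : IsTraversal m k T)
    (hkm : k - 1 < m - 1) {δ : ℝ} (hδ : ∀ i, i + 1 < m → δ ≤ dist (p i) (p (i + 1))) :
    δ ≤ 2 * travCost p q T := by
  obtain ⟨i, j, hij, hi₁j⟩ := hT.exists_horizontal_step hkm
  have hi : i + 1 < m := by have := (Prod.mk_le_mk.1 (hT.le_of_mem hi₁j)).1; omega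
  calc δ ≤ dist (p i) (p (i + 1)) := hδ i hi
    _ ≤ dist (p i) (q j) + dist (p (i + 1)) (q j) := dist_triangle_right _ _ _
    _ ≤ 2 * travCost p q T := by
      linarith [dist_le_travCost (p := p) (q := q) hij, dist_le_travCost (p := p) (q := q) hi₁j]

lemma half_le_discreteFrechet {m k : ℕ} (hkm : k - 1 < m - 1) {δ : ℝ}
    (hδ : ∀ i, i + 1 < m → δ ≤ dist (p i) (p (i + 1))) :
    δ / 2 ≤ discreteFrechet m p k q :=
  le_discreteFrechet fun _ hT => by linarith [hT.le_two_mul_travCost (q := q) hkm hδ]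

lemma dist_eraseVertex_le (p : ℕ → M) (i j : ℕ) :
    dist (p j) (eraseVertex p i (if j ≤ i then j else j - 1)) ≤ dist (p i) (p (i + 1)) := by
  rcases lt_trichotomy j i with hj | rfl | hj
  · simp [eraseVertex, hj.le, hj]
  · simp [eraseVertex]
  · have : ¬ j - 1 < i := by omega
    simp [eraseVertex, hj.not_ge, this, Nat.sub_add_cancel (i.zero_le.trans_lt hj)]

lemma discreteFrechet_eraseVertex_le {m i : ℕ} (hi : i < m) :
    discreteFrechet (m + 1) p m (eraseVertex p i) ≤ dist (p i) (p (i + 1)) := by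
  -- pair `p j` with itself, except `p i`, which is paired with `p (i + 1)`
  have hT : IsTraversal (m + 1) m
      ((List.range (m + 1)).map fun j => (j, if j ≤ i then j else j - 1)) :=
    isTraversal_map_range (by simp) (by simp [hi.not_ge])
      fun j _ => by dsimp only [FrechetStep]; split_ifs <;> omega
  refine (discreteFrechet_le_travCost hT).trans (travCost_le dist_nonneg ?_)
  simp only [List.mem_map, List.mem_range]
  rintro _ ⟨j, -, rfl⟩
  exact dist_eraseVertex_le p i j

end Cost

theorem init_two_approximate_simplification_general {M : Type*} [MetricSpace M]
    (k : ℕ) (Y : ℕ → M)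
    (i₀ : ℕ) (hi₀ : i₀ < k)
    (hmin : ∀ i < k, dist (Y i₀) (Y (i₀ + 1)) ≤ dist (Y i) (Y (i + 1))) :
    discreteFrechet (k + 1) Y k (fun j => if j < i₀ then Y j else Y (j + 1)) ≤
        dist (Y i₀) (Y (i₀ + 1)) ∧
    (∀ (kO : ℕ), 1 ≤ kO → kO ≤ k → ∀ O : ℕ → M,
        dist (Y i₀) (Y (i₀ + 1)) / 2 ≤ discreteFrechet (k + 1) Y kO O) ∧
    (∀ O : ℕ → M,
        discreteFrechet (k + 1) Y k (fun j => if j < i₀ then Y j else Y (j + 1)) ≤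
          2 * discreteFrechet (k + 1) Y k O) := by
  have hupper := discreteFrechet_eraseVertex_le (p := Y) hi₀
  have hlower : ∀ kO, 1 ≤ kO → kO ≤ k → ∀ O : ℕ → M,
      dist (Y i₀) (Y (i₀ + 1)) / 2 ≤ discreteFrechet (k + 1) Y kO O :=
    fun kO hkO hkOk _ => half_le_discreteFrechet (by omega) fun i hi => hmin i (by omega)
  refine ⟨hupper, hlower, fun O => hupper.trans ?_⟩
  linarith [hlower k (by omega) le_rfl O]

/-- **the `init` routine produces a `2`-approximate
`k`-simplification.** Let `Y` be a curve with `k + 1` vertices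
`Y 0, …, Y k`, no two consecutive vertices equal.  Let `i₀` be an index
attaining the minimum distance `d* = dist (Y i₀) (Y (i₀ + 1))` between
consecutive vertices, and let `X_k` be the curve of complexity `k` obtained by
deleting the vertex `Y i₀`.  Then `d_dF(Y, X_k) ≤ d*`, every curve `O` with at
most `k` vertices satisfies `d_dF(Y, O) ≥ d*/2`, and consequently
`d_dF(Y, X_k) ≤ 2 · d_dF(Y, O)` for every curve `O` of complexity `k`. -/
theorem init_two_approximate_simplification {M : Type*} [MetricSpace M]
    (k : ℕ) (hk : 1 ≤ k) (Y : ℕ → M)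
    (hne : ∀ i < k, Y i ≠ Y (i + 1))
    (i₀ : ℕ) (hi₀ : i₀ < k)
    (hmin : ∀ i < k, dist (Y i₀) (Y (i₀ + 1)) ≤ dist (Y i) (Y (i + 1))) :
    discreteFrechet (k + 1) Y k (fun j => if j < i₀ then Y j else Y (j + 1)) ≤
        dist (Y i₀) (Y (i₀ + 1)) ∧
    (∀ (kO : ℕ), 1 ≤ kO → kO ≤ k → ∀ O : ℕ → M,
        dist (Y i₀) (Y (i₀ + 1)) / 2 ≤ discreteFrechet (k + 1) Y kO O) ∧
    (∀ O : ℕ → M,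
        discreteFrechet (k + 1) Y k (fun j => if j < i₀ then Y j else Y (j + 1)) ≤
          2 * discreteFrechet (k + 1) Y k O) :=
  init_two_approximate_simplification_general k Y i₀ hi₀ hmin
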